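/- Let ν₀ = 1 and ν₁, ν₂, … be scalars, and suppose elements e_n, f_n, K^{±1} of an associative algebra over ℚ(q) satisfy, for all k, l > 0, Σ_{n=0}^{min(k,l)} q^{n(s-m)} ν_n K^{-n} e_s f_m = Σ_{n=0}^{min(k,l)} q^{n(m-s)} ν_n K^n f_m e_s where m = k - n, s = l - n, together with K e_m K⁻¹ = q^{2m} e_m and K f_m K⁻¹ = q^{-2m} f_m. Then for all k, l > 0: e_l f_k - f_k e_l = Σ_{p=1}^{min(k,l)} ( Σ_{r=1}^{p} ν_r θ_{p-r} (q^{k-l} K)^{r-p} ((q^{k-l}K)^r - (q^{k-l}K)^{-r}) ) f_{k-p} e_{l-p}, where θ_m = Σ_{c ∈ C_m} (-1)^{||c||} ν_c is the signed composition sum. -/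

import Mathlib

/-!
Put `x = q^{k-l} K`, `E_j = e_{l-j} f_{k-j}` and `F_j = f_{k-j} e_{l-j}`; the difference `k - l`
does not change when `k, l` are shifted down by `j`, so the defining relations read
`∑_n ν_n x^{-n} E_{j+n} = ∑_n ν_n x^n F_{j+n}` for `j ≤ min k l` (for `j = min k l` this is
`E_j = F_j`, as `e_0 = f_0 = 1`). The signed composition sums are the coefficients of the inverse
power series `θ = ν⁻¹` (splitting off the first block of a composition gives
`θ_{m+1} = -∑_j ν_{j+1} θ_{m-j}`). So summing the `j`-th relation against `θ_j x^{-j}` collapses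
the left side to `E_0` and turns the right side into `∑_p (∑_{i+r=p} θ_i ν_r x^{r-i}) F_p`.
Since `∑_{i+r=p} θ_i ν_r = 0` for `p > 0`, the coefficient of `F_p` can be rewritten as
`∑_{r=1}^p ν_r θ_{p-r} (x^{2r-p} - x^{-p})`.
-/

open scoped BigOperators

/-- The signed composition sum `θ_m = ∑_{c ∈ C_m} (-1)^{‖c‖} ν_c` (so `θ₀ = 1`). -/
noncomputable def compTheta (ν : ℕ → RatFunc ℚ) (m : ℕ) : RatFunc ℚ :=
  ∑ c : Composition m, (-1 : RatFunc ℚ) ^ c.length * (c.blocks.map ν).prod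

/-- `K^z` for `z : ℤ`, written via `K` and its inverse `Kinv`. -/
noncomputable def Kzpow {R : Type*} [Ring R] (K Kinv : R) (z : ℤ) : R :=
  K ^ z.toNat * Kinv ^ (-z).toNat

open Finset

lemma sum_range_succ_eq_add_sum_Icc {M : Type*} [AddCommMonoid M] (f : ℕ → M) (n : ℕ) :
    ∑ i ∈ range (n + 1), f i = f 0 + ∑ i ∈ Icc 1 n, f i := by
  rw [Nat.range_succ_eq_Icc_zero, ← sum_Ioc_add_eq_sum_Icc n.zero_le, add_comm,
    ← Finset.Icc_add_one_left_eq_Ioc, zero_add]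

lemma sum_range_sum_range_sub_eq_sum_antidiagonal {M : Type*} [AddCommMonoid M] (N : ℕ)
    (g : ℕ → ℕ → M) :
    ∑ j ∈ range (N + 1), ∑ n ∈ range (N + 1 - j), g j n =
      ∑ p ∈ range (N + 1), ∑ ij ∈ antidiagonal p, g ij.1 ij.2 := by
  simp_rw [Nat.sum_antidiagonal_eq_sum_range_succ g]
  exact (sum_range_diag_flip _ _).symm

section ShiftedRelation

variable {k A : Type*} [CommRing k] [Ring A] [Algebra k A]

lemma sum_antidiagonal_mul_eq_ite {θ ν : ℕ → k} (hθν : PowerSeries.mk θ * PowerSeries.mk ν = 1)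
    (p : ℕ) : ∑ ij ∈ antidiagonal p, θ ij.1 * ν ij.2 = if p = 0 then 1 else 0 := by
  simpa [PowerSeries.coeff_mul] using congrArg (PowerSeries.coeff p) hθν

lemma smul_zpow_mul_smul_zpow_mul (x : Aˣ) (a b : k) (m n : ℤ) (y : A) :
    a • (((x ^ m : Aˣ) : A) * (b • (((x ^ n : Aˣ) : A) * y))) =
      (a * b) • (((x ^ (m + n) : Aˣ) : A) * y) := by
  rw [mul_smul_comm, smul_smul, ← mul_assoc, ← Units.val_mul, ← zpow_add]

lemma sum_range_smul_zpow_mul_sum_eq (x : Aˣ) (θ ν : ℕ → k) (s : ℕ → ℤ) (G : ℕ → A) (N : ℕ) :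
    ∑ j ∈ range (N + 1), θ j • (((x ^ (-(j : ℤ)) : Aˣ) : A) *
        ∑ n ∈ range (N + 1 - j), ν n • (((x ^ s n : Aˣ) : A) * G (j + n))) =
      ∑ p ∈ range (N + 1), (∑ ij ∈ antidiagonal p,
        (θ ij.1 * ν ij.2) • ((x ^ (-(ij.1 : ℤ) + s ij.2) : Aˣ) : A)) * G p := by
  simp_rw [mul_sum, smul_sum, smul_zpow_mul_smul_zpow_mul]
  rw [sum_range_sum_range_sub_eq_sum_antidiagonal N
    fun j n => (θ j * ν n) • (((x ^ (-(j : ℤ) + s n) : Aˣ) : A) * G (j + n))]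
  refine sum_congr rfl fun p _ => ?_
  rw [sum_mul]
  exact sum_congr rfl fun ij hij => by rw [smul_mul_assoc, mem_antidiagonal.mp hij]

theorem eq_sum_antidiagonal_of_shifted_relation (x : Aˣ) {θ ν : ℕ → k}
    (hθν : PowerSeries.mk θ * PowerSeries.mk ν = 1) (E F : ℕ → A) (N : ℕ)
    (hEF : ∀ j ≤ N, ∑ n ∈ range (N + 1 - j), ν n • (((x ^ (-(n : ℤ)) : Aˣ) : A) * E (j + n)) =
      ∑ n ∈ range (N + 1 - j), ν n • (((x ^ (n : ℤ) : Aˣ) : A) * F (j + n))) :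
    E 0 = ∑ p ∈ range (N + 1),
      (∑ ij ∈ antidiagonal p, (θ ij.1 * ν ij.2) • ((x ^ ((ij.2 : ℤ) - ij.1) : Aˣ) : A)) * F p := by
  have hcoeff (p : ℕ) :
      ∑ ij ∈ antidiagonal p, (θ ij.1 * ν ij.2) • ((x ^ (-(ij.1 : ℤ) + -(ij.2 : ℤ)) : Aˣ) : A) =
        if p = 0 then 1 else 0 := by
    calc _ = (∑ ij ∈ antidiagonal p, θ ij.1 * ν ij.2) • ((x ^ (-(p : ℤ)) : Aˣ) : A) := by
          rw [sum_smul]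
          refine sum_congr rfl fun ij hij => ?_
          rw [← neg_add, ← Nat.cast_add, mem_antidiagonal.mp hij]
      _ = _ := by rw [sum_antidiagonal_mul_eq_ite hθν]; split_ifs with hp <;> simp [hp]
  calc E 0 = ∑ p ∈ range (N + 1), (if p = 0 then 1 else 0 : A) * E p := by simp
    _ = ∑ j ∈ range (N + 1), θ j • (((x ^ (-(j : ℤ)) : Aˣ) : A) *
          ∑ n ∈ range (N + 1 - j), ν n • (((x ^ (-(n : ℤ)) : Aˣ) : A) * E (j + n))) := by
        simp_rw [sum_range_smul_zpow_mul_sum_eq, hcoeff]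
    _ = ∑ j ∈ range (N + 1), θ j • (((x ^ (-(j : ℤ)) : Aˣ) : A) *
          ∑ n ∈ range (N + 1 - j), ν n • (((x ^ (n : ℤ) : Aˣ) : A) * F (j + n))) :=
        sum_congr rfl fun j hj => by rw [hEF j (Nat.lt_succ_iff.mp (mem_range.mp hj))]
    _ = _ := by simp_rw [sum_range_smul_zpow_mul_sum_eq, neg_add_eq_sub]

lemma sum_antidiagonal_smul_zpow_eq_sum_Icc (x : Aˣ) {θ ν : ℕ → k}
    (hθν : PowerSeries.mk θ * PowerSeries.mk ν = 1) {p : ℕ} (hp : p ≠ 0) :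
    ∑ ij ∈ antidiagonal p, (θ ij.1 * ν ij.2) • ((x ^ ((ij.2 : ℤ) - ij.1) : Aˣ) : A) =
      ∑ r ∈ Icc 1 p, (ν r * θ (p - r)) •
        (((x ^ (2 * (r : ℤ) - p) : Aˣ) : A) - ((x ^ (-(p : ℤ)) : Aˣ) : A)) := by
  calc _ = ∑ ij ∈ antidiagonal p, (θ ij.1 * ν ij.2) •
          (((x ^ ((ij.2 : ℤ) - ij.1) : Aˣ) : A) - ((x ^ (-(p : ℤ)) : Aˣ) : A)) := by
        simp_rw [smul_sub, sum_sub_distrib, ← sum_smul, sum_antidiagonal_mul_eq_ite hθν, if_neg hp,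
          zero_smul, sub_zero]
    _ = ∑ r ∈ range (p + 1), (θ (p - r) * ν r) •
          (((x ^ ((r : ℤ) - (p - r : ℕ)) : Aˣ) : A) - ((x ^ (-(p : ℤ)) : Aˣ) : A)) := by
        rw [← Nat.sum_antidiagonal_swap, Nat.sum_antidiagonal_eq_sum_range_succ_mk]
        rfl
    _ = _ := by
        rw [sum_range_succ_eq_add_sum_Icc]
        simp only [Nat.cast_zero, Nat.sub_zero, zero_sub, sub_self, smul_zero, zero_add]
        refine sum_congr rfl fun r hr => ?_
        rw [Nat.cast_sub (mem_Icc.mp hr).2, mul_comm, show (r : ℤ) - (p - r) = 2 * r - p by ring]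

theorem sub_eq_sum_Icc_of_shifted_relation (x : Aˣ) {θ ν : ℕ → k}
    (hθν : PowerSeries.mk θ * PowerSeries.mk ν = 1) (E F : ℕ → A) (N : ℕ)
    (hEF : ∀ j ≤ N, ∑ n ∈ range (N + 1 - j), ν n • (((x ^ (-(n : ℤ)) : Aˣ) : A) * E (j + n)) =
      ∑ n ∈ range (N + 1 - j), ν n • (((x ^ (n : ℤ) : Aˣ) : A) * F (j + n))) :
    E 0 - F 0 = ∑ p ∈ Icc 1 N, (∑ r ∈ Icc 1 p, (ν r * θ (p - r)) •
        (((x ^ (2 * (r : ℤ) - p) : Aˣ) : A) - ((x ^ (-(p : ℤ)) : Aˣ) : A))) * F p := by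
  have hθν0 : θ 0 * ν 0 = 1 := by simpa using sum_antidiagonal_mul_eq_ite hθν 0
  rw [eq_sum_antidiagonal_of_shifted_relation x hθν E F N hEF,
    sum_range_succ_eq_add_sum_Icc]
  simp only [Nat.antidiagonal_zero, sum_singleton, hθν0, one_smul, sub_self, zpow_zero,
    Units.val_one, one_mul, add_sub_cancel_left]
  refine sum_congr rfl fun p hp => ?_
  rw [sum_antidiagonal_smul_zpow_eq_sum_Icc x hθν (Nat.one_le_iff_ne_zero.mp (mem_Icc.mp hp).1)]

end ShiftedRelation

namespace Composition

def consBlock {m : ℕ} (j : Fin (m + 1)) (c : Composition (m - j)) : Composition (m + 1) where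
  blocks := (j + 1) :: c.blocks
  blocks_pos hi := by
    rcases List.mem_cons.mp hi with rfl | hi
    · exact Nat.succ_pos _
    · exact c.blocks_pos hi
  blocks_sum := by rw [List.sum_cons, c.blocks_sum]; omega

lemma consBlock_bijective (m : ℕ) :
    Function.Bijective fun x : Σ j : Fin (m + 1), Composition (m - j) => consBlock x.1 x.2 := by
  constructor
  · rintro ⟨j, c⟩ ⟨j', c'⟩ h
    obtain ⟨hj, hc⟩ := List.cons_eq_cons.mp (congrArg Composition.blocks h)
    obtain rfl : j = j' := Fin.ext (Nat.add_right_cancel hj)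
    obtain rfl : c = c' := Composition.ext hc
    rfl
  · rintro ⟨_ | ⟨b, t⟩, hpos, hsum⟩
    · simp at hsum
    · have hb : 0 < b := hpos List.mem_cons_self
      simp only [List.sum_cons] at hsum
      refine ⟨⟨⟨b - 1, by omega⟩, ⟨t, fun hi => hpos (List.mem_cons_of_mem _ hi), ?_⟩⟩,
        Composition.ext ?_⟩
      · show t.sum = m - (b - 1)
        omega
      · show (b - 1 + 1) :: t = b :: t
        rw [Nat.sub_add_cancel hb]

end Composition

lemma compTheta_zero (ν : ℕ → RatFunc ℚ) : compTheta ν 0 = 1 := by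
  have hnil (c : Composition 0) : c.blocks = [] := c.blocks_eq_nil.2 rfl
  simp [compTheta, Composition.length, hnil, composition_card]

lemma compTheta_succ (ν : ℕ → RatFunc ℚ) (m : ℕ) :
    compTheta ν (m + 1) = -∑ j ∈ range (m + 1), ν (j + 1) * compTheta ν (m - j) := by
  rw [← Fin.sum_univ_eq_sum_range (fun j => ν (j + 1) * compTheta ν (m - j)), compTheta,
    ← Fintype.sum_bijective _ (Composition.consBlock_bijective m) _ _ fun _ => rfl,
    ← univ_sigma_univ, sum_sigma, ← sum_neg_distrib]
  refine sum_congr rfl fun j _ => ?_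
  rw [compTheta, mul_sum, ← sum_neg_distrib]
  refine sum_congr rfl fun c _ => ?_
  simp only [Composition.consBlock, Composition.length, List.length_cons, List.map_cons,
    List.prod_cons, pow_succ]
  ring

lemma mk_compTheta_mul_mk (ν : ℕ → RatFunc ℚ) (hν0 : ν 0 = 1) :
    PowerSeries.mk (compTheta ν) * PowerSeries.mk ν = 1 := by
  ext (_ | m)
  · simp [PowerSeries.coeff_mul, compTheta_zero, hν0]
  · rw [PowerSeries.coeff_mul, Nat.sum_antidiagonal_succ', ← Nat.sum_antidiagonal_swap,
      Nat.sum_antidiagonal_eq_sum_range_succ_mk]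
    simp [compTheta_succ, hν0, mul_comm]

lemma val_zpow_algebraMap_mul {k A : Type*} [CommRing k] [Ring A] [Algebra k A] (t : kˣ)
    (u : Aˣ) (z : ℤ) :
    (((Units.map (algebraMap k A).toMonoidHom t * u) ^ z : Aˣ) : A) =
      ((t ^ z : kˣ) : k) • ((u ^ z : Aˣ) : A) := by
  have hcomm : Commute (Units.map (algebraMap k A).toMonoidHom t) u :=
    Units.ext (Algebra.commutes _ _)
  rw [hcomm.mul_zpow, Units.val_mul, ← map_zpow, Units.coe_map, Algebra.smul_def]
  rfl

lemma val_zpow_mk_eq_Kzpow {R : Type*} [Ring R] (K Kinv : R) (hK : K * Kinv = 1)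
    (hK' : Kinv * K = 1) (z : ℤ) :
    (((⟨K, Kinv, hK, hK'⟩ : Rˣ) ^ z : Rˣ) : R) = Kzpow K Kinv z := by
  cases z with
  | ofNat n => simp [Kzpow]
  | negSucc n =>
    rw [zpow_negSucc, ← inv_pow, Units.val_pow_eq_pow_val]
    simp [Kzpow, Int.neg_negSucc]

lemma shifted_relation_of_rel {R : Type*} [Ring R] [Algebra (RatFunc ℚ) R] {K Kinv : R}
    {e f : ℕ → R} {ν : ℕ → RatFunc ℚ} (x : Rˣ) {k l : ℕ}
    (hx : ∀ z : ℤ, ((x ^ z : Rˣ) : R) = (RatFunc.X : RatFunc ℚ) ^ (((k : ℤ) - l) * z) •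
      Kzpow K Kinv z)
    (he0 : e 0 = 1) (hf0 : f 0 = 1)
    (hrel : ∀ k l : ℕ, 1 ≤ k → 1 ≤ l →
      ∑ n ∈ Finset.range (min k l + 1),
          ((RatFunc.X : RatFunc ℚ) ^ ((n : ℤ) * ((l : ℤ) - k)) * ν n) •
            (Kinv ^ n * (e (l - n) * f (k - n))) =
      ∑ n ∈ Finset.range (min k l + 1),
          ((RatFunc.X : RatFunc ℚ) ^ ((n : ℤ) * ((k : ℤ) - l)) * ν n) •
            (K ^ n * (f (k - n) * e (l - n))))
    {j : ℕ} (hj : j ≤ min k l) :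
    ∑ n ∈ range (min k l + 1 - j),
        ν n • (((x ^ (-(n : ℤ)) : Rˣ) : R) * (e (l - (j + n)) * f (k - (j + n)))) =
      ∑ n ∈ range (min k l + 1 - j),
        ν n • (((x ^ (n : ℤ) : Rˣ) : R) * (f (k - (j + n)) * e (l - (j + n)))) := by
  rcases hj.lt_or_eq with hj | rfl
  · have h := hrel (k - j) (l - j) (by omega) (by omega)
    rw [show min (k - j) (l - j) + 1 = min k l + 1 - j by omega] at h
    have hd : ((k - j : ℕ) : ℤ) - (l - j : ℕ) = (k : ℤ) - l := by omega
    have hd' : ((l - j : ℕ) : ℤ) - (k - j : ℕ) = -((k : ℤ) - l) := by omega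
    refine (sum_congr rfl fun n _ => ?_).trans (h.trans (sum_congr rfl fun n _ => ?_))
    · rw [hx, Nat.sub_sub, Nat.sub_sub, hd', smul_mul_assoc, smul_smul,
        show Kzpow K Kinv (-(n : ℤ)) = Kinv ^ n by simp [Kzpow], mul_comm (ν n),
        show ((k : ℤ) - l) * -n = n * -((k : ℤ) - l) by ring]
    · rw [hx, Nat.sub_sub, Nat.sub_sub, hd, smul_mul_assoc, smul_smul,
        show Kzpow K Kinv (n : ℤ) = K ^ n by simp [Kzpow], mul_comm (ν n), mul_comm (n : ℤ)]
  · rcases min_choice k l with h | h <;> simp [h, he0, hf0]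

theorem commutation_general_case_general (R : Type*) [Ring R] [Algebra (RatFunc ℚ) R]
    (K Kinv : R) (e f : ℕ → R) (ν : ℕ → RatFunc ℚ)
    (hK : K * Kinv = 1) (hK' : Kinv * K = 1)
    (he0 : e 0 = 1) (hf0 : f 0 = 1) (hν0 : ν 0 = 1)
    (hrel : ∀ k l : ℕ, 1 ≤ k → 1 ≤ l →
      ∑ n ∈ Finset.range (min k l + 1),
          ((RatFunc.X : RatFunc ℚ) ^ ((n : ℤ) * ((l : ℤ) - k)) * ν n) •
            (Kinv ^ n * (e (l - n) * f (k - n))) =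
      ∑ n ∈ Finset.range (min k l + 1),
          ((RatFunc.X : RatFunc ℚ) ^ ((n : ℤ) * ((k : ℤ) - l)) * ν n) •
            (K ^ n * (f (k - n) * e (l - n)))) :
    ∀ k l : ℕ, 1 ≤ k → 1 ≤ l →
      e l * f k - f k * e l =
        ∑ p ∈ Finset.Icc 1 (min k l),
          (∑ r ∈ Finset.Icc 1 p,
              (((RatFunc.X : RatFunc ℚ) ^ (((k : ℤ) - l) * (2 * (r : ℤ) - p)) *
                  (ν r * compTheta ν (p - r))) • Kzpow K Kinv (2 * (r : ℤ) - p) -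
               ((RatFunc.X : RatFunc ℚ) ^ (-(((k : ℤ) - l) * p)) *
                  (ν r * compTheta ν (p - r))) • Kzpow K Kinv (-(p : ℤ)))) *
            (f (k - p) * e (l - p)) := by
  intro k l _ _
  let x : Rˣ := Units.map (algebraMap (RatFunc ℚ) R).toMonoidHom
    (Units.mk0 ((RatFunc.X : RatFunc ℚ) ^ ((k : ℤ) - l)) (zpow_ne_zero _ RatFunc.X_ne_zero)) *
      ⟨K, Kinv, hK, hK'⟩
  have hx (z : ℤ) : ((x ^ z : Rˣ) : R) =
      (RatFunc.X : RatFunc ℚ) ^ (((k : ℤ) - l) * z) • Kzpow K Kinv z := by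
    rw [val_zpow_algebraMap_mul, val_zpow_mk_eq_Kzpow K Kinv hK hK', Units.val_zpow_eq_zpow_val,
      Units.val_mk0, ← zpow_mul]
  have h := sub_eq_sum_Icc_of_shifted_relation x (mk_compTheta_mul_mk ν hν0)
    (fun j => e (l - j) * f (k - j)) (fun j => f (k - j) * e (l - j)) (min k l)
    fun j hj => shifted_relation_of_rel x hx he0 hf0 hrel hj
  simp only [Nat.sub_zero] at h
  rw [h]
  refine sum_congr rfl fun p _ => congrArg (· * _) (sum_congr rfl fun r _ => ?_)
  rw [hx, hx, mul_neg, smul_sub, smul_smul, smul_smul, mul_comm (ν r * _), mul_comm (ν r * _)]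

/-- The explicit commutation formula between `e_{il}` and `f_{ik}` in a quantum
Borcherds-Bozec algebra for an imaginary index `i`: from the relations
`∑_{n=0}^{min(k,l)} q^{n(s-m)} ν_n K^{-n} e_s f_m = ∑_n q^{n(m-s)} ν_n K^n f_m e_s`
(`m = k-n`, `s = l-n`), one deduces
`e_l f_k - f_k e_l = ∑_{p=1}^{min(k,l)} (∑_{r=1}^p ν_r θ_{p-r} (q^{k-l}K)^{r-p}((q^{k-l}K)^r - (q^{k-l}K)^{-r})) f_{k-p} e_{l-p}`,
where `(q^{k-l}K)^{r-p}((q^{k-l}K)^r - (q^{k-l}K)^{-r}) = q^{(k-l)(2r-p)} K^{2r-p} - q^{-(k-l)p} K^{-p}`. -/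
theorem commutation_general_case (R : Type*) [Ring R] [Algebra (RatFunc ℚ) R]
    (K Kinv : R) (e f : ℕ → R) (ν : ℕ → RatFunc ℚ)
    (hK : K * Kinv = 1) (hK' : Kinv * K = 1)
    (he0 : e 0 = 1) (hf0 : f 0 = 1) (hν0 : ν 0 = 1)
    (hKe : ∀ m, K * e m * Kinv = (RatFunc.X : RatFunc ℚ) ^ (2 * m) • e m)
    (hKf : ∀ m, K * f m * Kinv = ((RatFunc.X : RatFunc ℚ) ^ (-(2 * m : ℤ))) • f m)
    (hrel : ∀ k l : ℕ, 1 ≤ k → 1 ≤ l →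
      ∑ n ∈ Finset.range (min k l + 1),
          ((RatFunc.X : RatFunc ℚ) ^ ((n : ℤ) * ((l : ℤ) - k)) * ν n) •
            (Kinv ^ n * (e (l - n) * f (k - n))) =
      ∑ n ∈ Finset.range (min k l + 1),
          ((RatFunc.X : RatFunc ℚ) ^ ((n : ℤ) * ((k : ℤ) - l)) * ν n) •
            (K ^ n * (f (k - n) * e (l - n)))) :
    ∀ k l : ℕ, 1 ≤ k → 1 ≤ l →
      e l * f k - f k * e l =
        ∑ p ∈ Finset.Icc 1 (min k l),
          (∑ r ∈ Finset.Icc 1 p,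
              (((RatFunc.X : RatFunc ℚ) ^ (((k : ℤ) - l) * (2 * (r : ℤ) - p)) *
                  (ν r * compTheta ν (p - r))) • Kzpow K Kinv (2 * (r : ℤ) - p) -
               ((RatFunc.X : RatFunc ℚ) ^ (-(((k : ℤ) - l) * p)) *
                  (ν r * compTheta ν (p - r))) • Kzpow K Kinv (-(p : ℤ)))) *
            (f (k - p) * e (l - p)) :=
  commutation_general_case_general R K Kinv e f ν hK hK' he0 hf0 hν0 hrel
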